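/- Let G be a group, r ≥ 1, τ an automorphism of G, and θ the automorphism of G^r defined by θ(x_1,…,x_r) = (x_2,…,x_r,τ(x_1)). Fix g = (g_1,…,g_r) ∈ G^r and set ḡ_i = g_1⋯g_i (1 ≤ i ≤ r-1) and ḡ = g_1⋯g_r. Then x = (x_1,…,x_r) ∈ G^r satisfies x^{-1} g θ(x) = g if and only if x_{i+1} = ḡ_i^{-1} x_1 ḡ_i for all 1 ≤ i ≤ r-1 and x_1 ḡ τ(x_1)^{-1} = ḡ. In particular the map x_1 ↦ (x_1, ḡ_1^{-1}x_1ḡ_1, …, ḡ_{r-1}^{-1}x_1ḡ_{r-1}) is a group isomorphism from the τ-twisted centralizer {x_1 ∈ G : x_1 ḡ τ(x_1)^{-1} = ḡ} onto the θ-twisted centralizer {x ∈ G^r : x^{-1} g θ(x) = g}. -/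

import Mathlib

/-!
Write `c i = g₀ ⋯ g_{i-1}` and `ḡ = g₀ ⋯ g_{r-1}`. Away from the last coordinate the equation
`x⁻¹ g θ(x) = g` says `x_{i+1} = g_i⁻¹ x_i g_i`, so the whole of `x` is the conjugate
`x_i = c_i⁻¹ x₀ c_i` of its first coordinate. The last coordinate then reads
`τ(x₀) = g_{r-1}⁻¹ x_{r-1} g_{r-1} = ḡ⁻¹ x₀ ḡ`, which is the `τ`-twisted centralizer condition for `ḡ`.
-/

open Fin

section

variable {G : Type*} [Group G]

theorem inv_mul_mul_eq_self_iff {a b t : G} : a⁻¹ * b * t = b ↔ t = b⁻¹ * a * b := by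
  refine ⟨fun h => ?_, by rintro rfl; group⟩
  calc t = b⁻¹ * a * (a⁻¹ * b * t) := by group
    _ = b⁻¹ * a * b := by rw [h]

theorem mul_mul_inv_eq_self_iff {a b t : G} : a * b * t⁻¹ = b ↔ t = b⁻¹ * a * b := by
  refine ⟨fun h => ?_, by rintro rfl; group⟩
  calc t = (a * b * t⁻¹)⁻¹ * a * b := by group
    _ = b⁻¹ * a * b := by rw [h]

theorem bijOn_conj_of_eq_one {ι : Type*} (c : ι → G) {i₀ : ι} (hc : c i₀ = 1) (S : Set G) :
    Set.BijOn (fun x₀ i => (c i)⁻¹ * x₀ * c i) S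
      {x | (∀ i, x i = (c i)⁻¹ * x i₀ * c i) ∧ x i₀ ∈ S} := by
  refine ⟨fun x₀ hx₀ => ?_, fun a _ b _ hab => ?_,
    fun x ⟨hx, hx₀⟩ => ⟨x i₀, hx₀, funext fun i => (hx i).symm⟩⟩
  · simpa [hc] using hx₀
  · simpa [hc] using congrFun hab i₀

namespace Fin

variable {n : ℕ}

theorem partialProd_last (g : Fin n → G) : partialProd g (last n) = (List.ofFn g).prod := by
  simp [partialProd, List.take_of_length_le]

theorem forall_succ_eq_conj_iff (g : Fin n → G) (x : Fin (n + 1) → G) :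
    (∀ i : Fin n, x i.succ = (g i)⁻¹ * x i.castSucc * g i) ↔
      ∀ i, x i = (partialProd g i)⁻¹ * x 0 * partialProd g i := by
  constructor
  · intro hx i
    induction i using Fin.induction with
    | zero => simp
    | succ i ih => rw [hx, ih, partialProd_succ]; group
  · intro hx i
    rw [hx i.succ, hx i.castSucc, partialProd_succ]
    group

end Fin

/-- The twist `θ(x₀, …, x_n) = (x₁, …, x_n, τ x₀)` of `α^(n+1)`. -/
def cyclicTwist {α : Type*} {n : ℕ} (τ : α → α) (x : Fin (n + 1) → α) : Fin (n + 1) → α :=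
  snoc (α := fun _ => α) (tail x) (τ (x 0))

section cyclicTwist

variable {α : Type*} {n : ℕ} (τ : α → α) (x : Fin (n + 1) → α)

@[simp]
theorem cyclicTwist_castSucc (i : Fin n) : cyclicTwist τ x i.castSucc = x i.succ :=
  snoc_castSucc (α := fun _ => α) _ _ i

@[simp]
theorem cyclicTwist_last : cyclicTwist τ x (last n) = τ (x 0) :=
  snoc_last (α := fun _ => α) _ _

theorem cyclicTwist_apply (i : Fin (n + 1)) :
    cyclicTwist τ x i = if h : (i : ℕ) + 1 < n + 1 then x ⟨(i : ℕ) + 1, h⟩ else τ (x 0) := by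
  induction i using Fin.lastCases with
  | last => simp
  | cast i => simp [succ]

end cyclicTwist

theorem forall_inv_mul_mul_cyclicTwist_iff {n : ℕ} (τ : G → G) (g x : Fin (n + 1) → G) :
    (∀ i, (x i)⁻¹ * g i * cyclicTwist τ x i = g i) ↔
      (∀ i, x i = (partialProd (init g) i)⁻¹ * x 0 * partialProd (init g) i) ∧
        x 0 * (List.ofFn g).prod * (τ (x 0))⁻¹ = (List.ofFn g).prod := by
  rw [forall_fin_succ']
  simp only [cyclicTwist_castSucc, cyclicTwist_last, inv_mul_mul_eq_self_iff,
    mul_mul_inv_eq_self_iff]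
  rw [← forall_succ_eq_conj_iff (init g)]
  refine and_congr_right fun hx => Eq.congr_right ?_
  rw [(forall_succ_eq_conj_iff (init g) x).mp hx, ← partialProd_last, ← succ_last, partialProd_succ,
    partialProd_init]
  group

end

/-- For the twist `θ(x_1,…,x_r) = (x_2,…,x_r,τ(x_1))` of `G^r` and `g ∈ G^r`, with
`c i = g_1⋯g_i` (partial products, `c 0 = 1`) and `ḡ = g_1⋯g_r`:
an element `x ∈ G^r` lies in the `θ`-twisted centralizer of `g` iff
`x_i = c_i⁻¹ x_0 c_i` for all `i` and `x_0` lies in the `τ`-twisted centralizer of `ḡ`;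
moreover `x₀ ↦ (c_i⁻¹ x₀ c_i)_i` is multiplicative and a bijection from the `τ`-twisted
centralizer of `ḡ` onto the `θ`-twisted centralizer of `g`. -/
theorem stmt2 (G : Type*) [Group G] (r : ℕ) (hr : 1 ≤ r) (τ : G ≃* G)
    (θ : (Fin r → G) → (Fin r → G))
    (hθ : ∀ (x : Fin r → G) (i : Fin r),
      θ x i = if h : (i : ℕ) + 1 < r then x ⟨(i : ℕ) + 1, h⟩ else τ (x ⟨0, by omega⟩))
    (g : Fin r → G) (c : Fin r → G)
    (hc : ∀ i : Fin r, c i = ((List.ofFn g).take (i : ℕ)).prod) :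
    (∀ x : Fin r → G,
      (∀ i, (x i)⁻¹ * g i * θ x i = g i) ↔
        ((∀ i : Fin r, x i = (c i)⁻¹ * x ⟨0, by omega⟩ * c i) ∧
          x ⟨0, by omega⟩ * (List.ofFn g).prod * (τ (x ⟨0, by omega⟩))⁻¹ = (List.ofFn g).prod))
    ∧ (∀ a b : G, (fun i => (c i)⁻¹ * (a * b) * c i) =
        (fun i => (c i)⁻¹ * a * c i) * (fun i => (c i)⁻¹ * b * c i))
    ∧ Set.BijOn (fun x₀ : G => fun i => (c i)⁻¹ * x₀ * c i)
        {x₀ : G | x₀ * (List.ofFn g).prod * (τ x₀)⁻¹ = (List.ofFn g).prod}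
        {x : Fin r → G | ∀ i, (x i)⁻¹ * g i * θ x i = g i} := by
  obtain ⟨n, rfl⟩ : ∃ n, r = n + 1 := ⟨r - 1, by omega⟩
  obtain rfl : θ = cyclicTwist τ := funext₂ fun x i => by rw [hθ, cyclicTwist_apply]; rfl
  obtain rfl : c = partialProd (init g) := funext fun i => by rw [hc, partialProd_init]; rfl
  refine ⟨forall_inv_mul_mul_cyclicTwist_iff τ g,
    fun a b => funext fun i => by simp only [Pi.mul_apply]; group, ?_⟩
  convert bijOn_conj_of_eq_one (partialProd (init g)) (partialProd_zero _) _ using 1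
  ext x
  exact forall_inv_mul_mul_cyclicTwist_iff τ g x
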